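/- arXiv:2510.12152 — 2 statements merged into one kernel-verified Lean document; each statement's English description precedes it below -/
import Mathlib

section
/- Let α > 1, K ≥ 2 an integer, i* ∈ {1,…,K}, and λ ∈ [0,∞)^K with ∑_{j≠i*} (2^{1/α}+λ_j)^{-α} > 1/2. Then ∫_1^∞ α (z+λ_{i*})^{-(α+1)} ∏_{j≠i*} (1 − (z+λ_j)^{-α}) dz ≤ (1 + e^{-1/2})/2. -/
/-!
Put `c = 2^{1/α}`, so that `c^{-α} = 1/2`. For `1 < z ≤ c` each factor satisfies
`1 - (z + λ_j)^{-α} ≤ exp (-(c + λ_j)^{-α})`, so by the hypothesis the product is at most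
`ε := exp (-1/2)` there; beyond `c` it is at most `1`. The density of arm `i*` has mass
`p = (1 + λ_{i*})^{-α} ≤ 1` on `(1, ∞)` and `q = (c + λ_{i*})^{-α} ≤ 1/2` on `(c, ∞)`, so the
integral is at most `ε (p - q) + q ≤ ε + (1 - ε) q ≤ (1 + ε) / 2`.
-/

open MeasureTheory Real Set Filter Topology

section ParetoDensity

lemma hasDerivAt_neg_rpow_neg_add (α : ℝ) {l x : ℝ} (hx : 0 < x + l) :
    HasDerivAt (fun z => -(z + l) ^ (-α)) (α * (x + l) ^ (-(α + 1))) x := by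
  refine (((hasDerivAt_rpow_const (Or.inl hx.ne')).comp x
    ((hasDerivAt_id x).add_const l)).neg).congr_deriv ?_
  rw [show -α - 1 = -(α + 1) by ring]
  simp

variable {α l a : ℝ}

lemma tendsto_neg_rpow_neg_add_atTop (hα : 0 < α) :
    Tendsto (fun z : ℝ => -(z + l) ^ (-α)) atTop (𝓝 0) := by
  simpa using ((tendsto_rpow_neg_atTop hα).comp (tendsto_atTop_add_const_right _ l tendsto_id)).neg

lemma integrableOn_Ioi_pareto_density (hα : 0 < α) (ha : 0 < a + l) :
    IntegrableOn (fun z => α * (z + l) ^ (-(α + 1))) (Ioi a) := by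
  have hpos : ∀ x ∈ Ici a, 0 < x + l := fun x hx => by linarith [mem_Ici.1 hx]
  refine integrableOn_Ioi_deriv_of_nonneg' (fun x hx => hasDerivAt_neg_rpow_neg_add α (hpos x hx))
    (fun x hx => ?_) (tendsto_neg_rpow_neg_add_atTop hα)
  have := hpos x (Ioi_subset_Ici_self hx)
  positivity

lemma integral_Ioi_pareto_density (hα : 0 < α) (ha : 0 < a + l) :
    ∫ z in Ioi a, α * (z + l) ^ (-(α + 1)) = (a + l) ^ (-α) := by
  have hpos : ∀ x ∈ Ici a, 0 < x + l := fun x hx => by linarith [mem_Ici.1 hx]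
  rw [integral_Ioi_of_hasDerivAt_of_nonneg' (fun x hx => hasDerivAt_neg_rpow_neg_add α (hpos x hx))
    (fun x hx => by have := hpos x (Ioi_subset_Ici_self hx); positivity)
    (tendsto_neg_rpow_neg_add_atTop hα)]
  ring

end ParetoDensity

lemma prod_one_sub_le_exp_neg_sum {ι : Type*} (s : Finset ι) {x : ι → ℝ}
    (hx : ∀ i ∈ s, x i ≤ 1) : ∏ i ∈ s, (1 - x i) ≤ exp (-∑ i ∈ s, x i) := by
  rw [← Finset.sum_neg_distrib, exp_sum]
  exact Finset.prod_le_prod (fun i hi => sub_nonneg.2 (hx i hi)) fun i _ => one_sub_le_exp_neg _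

lemma setIntegral_Ioi_mul_le {g P : ℝ → ℝ} {a c q : ℝ} (hac : a ≤ c)
    (hg : IntegrableOn g (Ioi a)) (hg0 : ∀ z ∈ Ioi a, 0 ≤ g z)
    (hPm : AEStronglyMeasurable P (volume.restrict (Ioi a)))
    (hP0 : ∀ z ∈ Ioi a, 0 ≤ P z) (hP1 : ∀ z ∈ Ioi a, P z ≤ 1) (hPq : ∀ z ∈ Ioc a c, P z ≤ q) :
    ∫ z in Ioi a, g z * P z ≤ q * ((∫ z in Ioi a, g z) - ∫ z in Ioi c, g z) + ∫ z in Ioi c, g z := by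
  have hgP : IntegrableOn (fun z => g z * P z) (Ioi a) := by
    refine hg.mono' (hg.aestronglyMeasurable.mul hPm) ?_
    filter_upwards [ae_restrict_mem measurableSet_Ioi] with z hz
    rw [norm_eq_abs, abs_of_nonneg (mul_nonneg (hg0 z hz) (hP0 z hz))]
    exact mul_le_of_le_one_right (hg0 z hz) (hP1 z hz)
  have hsplit : ∀ f : ℝ → ℝ, IntegrableOn f (Ioi a) →
      ∫ z in Ioi a, f z = (∫ z in Ioc a c, f z) + ∫ z in Ioi c, f z := fun f hf => by
    rw [← setIntegral_union (Ioc_disjoint_Ioi le_rfl) measurableSet_Ioi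
      (hf.mono_set Ioc_subset_Ioi_self) (hf.mono_set (Ioi_subset_Ioi hac)),
      Ioc_union_Ioi_eq_Ioi hac]
  have hnear : ∫ z in Ioc a c, g z * P z ≤ q * ∫ z in Ioc a c, g z := by
    rw [← integral_const_mul]
    refine setIntegral_mono_on (hgP.mono_set Ioc_subset_Ioi_self)
      ((hg.mono_set Ioc_subset_Ioi_self).const_mul q) measurableSet_Ioc fun z hz => ?_
    rw [mul_comm q]
    exact mul_le_mul_of_nonneg_left (hPq z hz) (hg0 z hz.1)
  have hfar : ∫ z in Ioi c, g z * P z ≤ ∫ z in Ioi c, g z := by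
    refine setIntegral_mono_on (hgP.mono_set (Ioi_subset_Ioi hac))
      (hg.mono_set (Ioi_subset_Ioi hac)) measurableSet_Ioi fun z hz => ?_
    have hz' : z ∈ Ioi a := lt_of_le_of_lt hac hz
    exact mul_le_of_le_one_right (hg0 z hz') (hP1 z hz')
  calc ∫ z in Ioi a, g z * P z
      = (∫ z in Ioc a c, g z * P z) + ∫ z in Ioi c, g z * P z := hsplit _ hgP
    _ ≤ q * (∫ z in Ioc a c, g z) + ∫ z in Ioi c, g z := add_le_add hnear hfar
    _ = _ := by rw [hsplit g hg, add_sub_cancel_right]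

lemma rpow_one_div_rpow_neg {x α : ℝ} (hx : 0 ≤ x) (hα : α ≠ 0) : (x ^ (1 / α)) ^ (-α) = x⁻¹ := by
  rw [← rpow_mul hx, div_mul_eq_mul_div, one_mul, neg_div, div_self hα, rpow_neg_one]

lemma rpow_neg_mem_Icc {x α : ℝ} (hx : 1 ≤ x) (hα : 0 ≤ α) : x ^ (-α) ∈ Icc 0 1 :=
  ⟨rpow_nonneg (by linarith) _, rpow_le_one_of_one_le_of_nonpos hx (by linarith)⟩

section SurvivalProduct

variable {ι : Type*} (s : Finset ι) {lam : ι → ℝ} {α z : ℝ}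

lemma prod_one_sub_rpow_neg_mem_Icc (hlam : ∀ j ∈ s, 0 ≤ lam j) (hα : 0 ≤ α) (hz : 1 ≤ z) :
    ∏ j ∈ s, (1 - (z + lam j) ^ (-α)) ∈ Icc 0 1 := by
  have h j (hj : j ∈ s) := rpow_neg_mem_Icc (x := z + lam j) (by linarith [hlam j hj]) hα
  exact ⟨Finset.prod_nonneg fun j hj => sub_nonneg.2 (h j hj).2,
    Finset.prod_le_one (fun j hj => sub_nonneg.2 (h j hj).2) fun j hj => sub_le_self _ (h j hj).1⟩

lemma prod_one_sub_rpow_neg_le_exp (hlam : ∀ j ∈ s, 0 ≤ lam j) (hα : 0 ≤ α) (hz : 1 ≤ z)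
    {c : ℝ} (hzc : z ≤ c) :
    ∏ j ∈ s, (1 - (z + lam j) ^ (-α)) ≤ exp (-∑ j ∈ s, (c + lam j) ^ (-α)) := by
  refine (prod_one_sub_le_exp_neg_sum s fun j hj =>
    (rpow_neg_mem_Icc (by linarith [hlam j hj]) hα).2).trans (exp_le_exp.2 (neg_le_neg ?_))
  exact Finset.sum_le_sum fun j hj =>
    rpow_le_rpow_of_nonpos (by linarith [hlam j hj]) (by linarith) (by linarith)

end SurvivalProduct

lemma mul_sub_add_le_one_add_div_two {e p q : ℝ} (he0 : 0 ≤ e) (he1 : e ≤ 1) (hp : p ≤ 1)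
    (hq : q ≤ 1 / 2) : e * (p - q) + q ≤ (1 + e) / 2 := by
  nlinarith

theorem ftpl_pareto_prob_upper_bound_on_Dtc_general
    (α : ℝ) (hα : 1 < α) (K : ℕ) (istar : Fin K)
    (lam : Fin K → ℝ) (hlam : ∀ j, 0 ≤ lam j)
    (hDc : 1 / 2 < ∑ j ∈ Finset.univ.erase istar, ((2 : ℝ) ^ (1 / α) + lam j) ^ (-α)) :
    (∫ z in Set.Ioi (1 : ℝ),
        α * (z + lam istar) ^ (-(α + 1)) *
          ∏ j ∈ Finset.univ.erase istar, (1 - (z + lam j) ^ (-α)))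
      ≤ (1 + Real.exp (-(1 / 2))) / 2 := by
  set c : ℝ := (2 : ℝ) ^ (1 / α)
  set l := lam istar
  have hα0 : 0 < α := by linarith
  have hl : 0 ≤ l := hlam istar
  have hc : 1 ≤ c := one_le_rpow (by norm_num) (by positivity)
  have hsurv z (hz : 1 ≤ z) := prod_one_sub_rpow_neg_mem_Icc (Finset.univ.erase istar)
    (fun j _ => hlam j) hα0.le hz
  have hbound := setIntegral_Ioi_mul_le (q := exp (-(1 / 2)))
    (g := fun z => α * (z + l) ^ (-(α + 1)))
    (P := fun z => ∏ j ∈ Finset.univ.erase istar, (1 - (z + lam j) ^ (-α))) hc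
    (integrableOn_Ioi_pareto_density hα0 (by linarith))
    (fun z hz => mul_nonneg hα0.le (rpow_nonneg (by linarith [mem_Ioi.1 hz]) _))
    (Finset.measurable_prod _ fun j _ =>
      measurable_const.sub ((measurable_id.add_const _).pow_const _)).aestronglyMeasurable
    (fun z hz => (hsurv z hz.le).1) (fun z hz => (hsurv z hz.le).2)
    (fun z hz => (prod_one_sub_rpow_neg_le_exp _ (fun j _ => hlam j) hα0.le hz.1.le hz.2).trans
      (exp_le_exp.2 (neg_le_neg hDc.le)))
  rw [integral_Ioi_pareto_density (a := 1) hα0 (by linarith),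
    integral_Ioi_pareto_density (a := c) hα0 (by linarith)] at hbound
  refine hbound.trans (mul_sub_add_le_one_add_div_two (exp_pos _).le
    (exp_lt_one_iff.2 (by norm_num)).le (rpow_neg_mem_Icc (by linarith) hα0.le).2 ?_)
  calc (c + l) ^ (-α) ≤ c ^ (-α) := rpow_le_rpow_of_nonpos (by linarith) (by linarith) (by linarith)
    _ = 1 / 2 := by rw [rpow_one_div_rpow_neg (by norm_num) hα0.ne', one_div]

/-- on the complement `D_t^c`, the FTPL exploitation probability of the
arm `i*` is at most `(1+e^{-1/2})/2`. -/
theorem ftpl_pareto_prob_upper_bound_on_Dtc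
    (α : ℝ) (hα : 1 < α) (K : ℕ) (hK : 2 ≤ K) (istar : Fin K)
    (lam : Fin K → ℝ) (hlam : ∀ j, 0 ≤ lam j)
    (hDc : 1 / 2 < ∑ j ∈ Finset.univ.erase istar, ((2 : ℝ) ^ (1 / α) + lam j) ^ (-α)) :
    (∫ z in Set.Ioi (1 : ℝ),
        α * (z + lam istar) ^ (-(α + 1)) *
          ∏ j ∈ Finset.univ.erase istar, (1 - (z + lam j) ^ (-α)))
      ≤ (1 + Real.exp (-(1 / 2))) / 2 :=
  ftpl_pareto_prob_upper_bound_on_Dtc_general α hα K istar lam hlam hDc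
end

section
/- Let α > 1, u ≥ 0, and i ≥ 1 an integer. Then ∫_0^∞ (z+u+1)^{-(α+2)} (1 − (z+u+1)^{-α})^{i−1} dz ≤ e / ((α+1)(1+u)·i). -/
/-!
Write `x = z + u + 1 ≥ 1 + u`. The integrand is `x⁻¹` times
`x ^ (-(α + 1)) (1 - x ^ (-α)) ^ (i - 1)`, and the latter is the derivative in `z` of
`(1 - x ^ (-α)) ^ i / (i α)`, which increases from a nonnegative value to `1 / (i α)`.
Bounding `x⁻¹ ≤ (1 + u)⁻¹` gives `1 / (i α (1 + u))`, and `1 / α ≤ e / (α + 1)`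
because `α + 1 ≤ 2α ≤ e α` for `α ≥ 1`.
-/

open MeasureTheory Set Filter Topology Real

section ParetoTail

variable {α c : ℝ}

theorem one_sub_rpow_neg_nonneg (hα : 0 ≤ α) {x : ℝ} (hx : 1 ≤ x) : 0 ≤ 1 - x ^ (-α) :=
  sub_nonneg.2 (rpow_le_one_of_one_le_of_nonpos hx (neg_nonpos.2 hα))

theorem rpow_mul_one_sub_rpow_neg_pow_nonneg (hα : 0 ≤ α) (p : ℝ) (n : ℕ) {x : ℝ}
    (hx : 1 ≤ x) : 0 ≤ x ^ p * (1 - x ^ (-α)) ^ n :=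
  mul_nonneg (rpow_nonneg (by linarith) p) (pow_nonneg (one_sub_rpow_neg_nonneg hα hx) n)

theorem hasDerivAt_one_sub_add_rpow_neg_pow_div (hα : α ≠ 0) (n : ℕ) {x : ℝ}
    (hx : 0 < x + c) :
    HasDerivAt (fun z : ℝ => (1 - (z + c) ^ (-α)) ^ (n + 1) / ((n + 1) * α))
      ((x + c) ^ (-(α + 1)) * (1 - (x + c) ^ (-α)) ^ n) x := by
  have h := (((hasDerivAt_id (x + c)).rpow_const (p := -α) (Or.inl hx.ne')).const_sub 1).pow
    (n + 1) |>.div_const ((n + 1) * α) |>.comp_add_const x c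
  refine h.congr_deriv ?_
  rw [show -α - 1 = -(α + 1) by ring]
  simp only [id, Nat.add_sub_cancel]
  field_simp
  push_cast
  ring

theorem tendsto_one_sub_add_rpow_neg_pow_div (hα : 0 < α) (n : ℕ) :
    Tendsto (fun z : ℝ => (1 - (z + c) ^ (-α)) ^ (n + 1) / ((n + 1) * α)) atTop
      (𝓝 (1 / ((n + 1) * α))) := by
  have h : Tendsto (fun z : ℝ => (z + c) ^ (-α)) atTop (𝓝 0) :=
    (tendsto_rpow_neg_atTop hα).comp (tendsto_atTop_add_const_right atTop c tendsto_id)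
  simpa using (((tendsto_const_nhds (x := (1 : ℝ))).sub h).pow (n + 1)).div_const ((n + 1) * α)

theorem integrableOn_Ioi_add_rpow_neg_mul_one_sub_rpow_neg_pow (hα : 0 < α) (n : ℕ)
    (hc : 1 ≤ c) :
    IntegrableOn (fun z => (z + c) ^ (-(α + 1)) * (1 - (z + c) ^ (-α)) ^ n) (Ioi 0) :=
  integrableOn_Ioi_deriv_of_nonneg'
    (fun z hz => hasDerivAt_one_sub_add_rpow_neg_pow_div hα.ne' n (by linarith [mem_Ici.1 hz]))
    (fun z hz => rpow_mul_one_sub_rpow_neg_pow_nonneg hα.le _ n (by linarith [mem_Ioi.1 hz]))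
    (tendsto_one_sub_add_rpow_neg_pow_div hα n)

theorem integral_Ioi_add_rpow_neg_mul_one_sub_rpow_neg_pow (hα : 0 < α) (n : ℕ) (hc : 1 ≤ c) :
    ∫ z in Ioi 0, (z + c) ^ (-(α + 1)) * (1 - (z + c) ^ (-α)) ^ n
      = (1 - (1 - c ^ (-α)) ^ (n + 1)) / ((n + 1) * α) := by
  rw [integral_Ioi_of_hasDerivAt_of_nonneg'
    (fun z hz => hasDerivAt_one_sub_add_rpow_neg_pow_div hα.ne' n (by linarith [mem_Ici.1 hz]))
    (fun z hz => rpow_mul_one_sub_rpow_neg_pow_nonneg hα.le _ n (by linarith [mem_Ioi.1 hz]))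
    (tendsto_one_sub_add_rpow_neg_pow_div hα n), zero_add, sub_div]

theorem integral_Ioi_add_rpow_neg_add_two_mul_one_sub_rpow_neg_pow_le (hα : 0 < α) (n : ℕ)
    (hc : 1 ≤ c) :
    ∫ z in Ioi 0, (z + c) ^ (-(α + 2)) * (1 - (z + c) ^ (-α)) ^ n
      ≤ 1 / (c * ((n + 1) * α)) := by
  have hpointwise : ∀ z ∈ Ioi (0 : ℝ), (z + c) ^ (-(α + 2)) * (1 - (z + c) ^ (-α)) ^ n
      ≤ c⁻¹ * ((z + c) ^ (-(α + 1)) * (1 - (z + c) ^ (-α)) ^ n) := by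
    intro z hz
    have hzc : 1 ≤ z + c := by linarith [mem_Ioi.1 hz]
    rw [show -(α + 2) = -(α + 1) + -1 by ring, rpow_add (by linarith), rpow_neg_one,
      mul_comm ((z + c) ^ (-(α + 1))), mul_assoc]
    exact mul_le_mul_of_nonneg_right (inv_anti₀ (by linarith) (by linarith [mem_Ioi.1 hz]))
      (rpow_mul_one_sub_rpow_neg_pow_nonneg hα.le _ n hzc)
  have hpow : 0 ≤ (1 - c ^ (-α)) ^ (n + 1) := pow_nonneg (one_sub_rpow_neg_nonneg hα.le hc) _
  calc ∫ z in Ioi 0, (z + c) ^ (-(α + 2)) * (1 - (z + c) ^ (-α)) ^ n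
      ≤ ∫ z in Ioi 0, c⁻¹ * ((z + c) ^ (-(α + 1)) * (1 - (z + c) ^ (-α)) ^ n) :=
        setIntegral_mono_of_nonneg
          (fun z hz => rpow_mul_one_sub_rpow_neg_pow_nonneg hα.le _ n (by linarith [mem_Ioi.1 hz]))
          hpointwise ((integrableOn_Ioi_add_rpow_neg_mul_one_sub_rpow_neg_pow hα n hc).const_mul _)
    _ = c⁻¹ * ((1 - (1 - c ^ (-α)) ^ (n + 1)) / ((n + 1) * α)) := by
        rw [integral_const_mul, integral_Ioi_add_rpow_neg_mul_one_sub_rpow_neg_pow hα n hc]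
    _ ≤ c⁻¹ * (1 / ((n + 1) * α)) := by gcongr; linarith
    _ = 1 / (c * ((n + 1) * α)) := by rw [← one_div, one_div_mul_one_div]

end ParetoTail

theorem add_one_le_exp_one_mul {α : ℝ} (hα : 1 ≤ α) : α + 1 ≤ exp 1 * α := by
  nlinarith [add_one_le_exp (1 : ℝ)]

/-- second bound on the stability integral `I_{i,α+2}`:
`∫_0^∞ (z+u+1)^{-(α+2)} (1−(z+u+1)^{-α})^{i−1} dz ≤ e/((α+1)(1+u)i)`. -/
theorem ftpl_pareto_stability_integral_second_bound
    (α : ℝ) (hα : 1 < α) (u : ℝ) (hu : 0 ≤ u) (i : ℕ) (hi : 1 ≤ i) :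
    (∫ z in Set.Ioi (0 : ℝ),
        (z + u + 1) ^ (-(α + 2)) * (1 - (z + u + 1) ^ (-α)) ^ (i - 1))
      ≤ Real.exp 1 / ((α + 1) * (1 + u) * i) := by
  obtain ⟨n, rfl⟩ : ∃ n, i = n + 1 := Nat.exists_eq_add_of_le' hi
  simp_rw [add_assoc _ u 1, Nat.add_sub_cancel]
  have hscale : (α + 1) * ((1 + u) * (n + 1)) ≤ exp 1 * α * ((1 + u) * (n + 1)) :=
    mul_le_mul_of_nonneg_right (add_one_le_exp_one_mul hα.le) (by positivity)
  calc _ ≤ 1 / ((u + 1) * ((n + 1) * α)) :=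
        integral_Ioi_add_rpow_neg_add_two_mul_one_sub_rpow_neg_pow_le (by linarith) n (by linarith)
    _ ≤ exp 1 / ((α + 1) * (1 + u) * (n + 1 : ℕ)) := by
        rw [div_le_div_iff₀ (by positivity) (by positivity)]
        push_cast
        linarith
end
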